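/- arXiv:2504.18909 — 2 statements merged into one kernel-verified Lean document; each statement's English description precedes it below -/
import Mathlib

section
/- Let φ : R → S be a surjective ring homomorphism between commutative local rings (so that φ is automatically a local homomorphism and induces an isomorphism of residue fields). Then φ induces a surjective ring homomorphism φ₊ : GW(R) → GW(S) with φ₊([a]) = [φ(a)] for every unit a of R, and the kernel of φ₊ is additively generated by the elements [a]·⟨⟨x⟩⟩ = [a] − [a·x] for units a, x of R with φ(x) = 1. In particular, φ₊ is an isomorphism whenever the induced map on square classes Rˣ/(Rˣ)² → Sˣ/(Sˣ)² is injective. -/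
noncomputable section

/-- The subgroup of squares of units of a commutative ring. -/
def squareUnits (R : Type) [CommRing R] : Subgroup Rˣ :=
  (powMonoidHom 2 : Rˣ →* Rˣ).range

/-- The group of square classes `Rˣ/(Rˣ)²`. -/
def SqCl (R : Type) [CommRing R] : Type := Rˣ ⧸ squareUnits R

instance (R : Type) [CommRing R] : CommGroup (SqCl R) :=
  QuotientGroup.Quotient.commGroup (squareUnits R)

/-- The square class `[a]` of a unit `a`. -/
def cls {R : Type} [CommRing R] (a : Rˣ) : SqCl R := QuotientGroup.mk a

/-- The group ring `ℤ[Rˣ/(Rˣ)²]`. -/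
abbrev GRing (R : Type) [CommRing R] := MonoidAlgebra ℤ (SqCl R)

/-- The generator `[a]` of the group ring, for a unit `a`. -/
def gen {R : Type} [CommRing R] (a : Rˣ) : GRing R :=
  MonoidAlgebra.of ℤ (SqCl R) (cls a)

/-- The set of relations defining the Grothendieck–Witt ring of a (connected semi-)local ring:
`([a₁]+[a₂]+[a₃]+[a₄]) − ([b₁]+[b₂]+[b₃]+[b₄])` whenever there exists `P ∈ GL₄(R)` with
`P ⬝ diag(a₁,…,a₄) ⬝ Pᵀ = diag(b₁,…,b₄)`. -/
def gwRel (R : Type) [CommRing R] : Set (GRing R) :=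
  {x | ∃ (a b : Fin 4 → Rˣ) (P : Matrix (Fin 4) (Fin 4) R),
    IsUnit P.det ∧
    P * Matrix.diagonal (fun i => (a i : R)) * P.transpose =
      Matrix.diagonal (fun i => (b i : R)) ∧
    x = (∑ i, gen (a i)) - (∑ i, gen (b i))}

/-- The (symmetric) Grothendieck–Witt ring of `R`, presented à la Knebusch–Rosenberg–Ware. -/
abbrev GW (R : Type) [CommRing R] := GRing R ⧸ Ideal.span (gwRel R)

/-- The class `[a] ∈ GW(R)` of a unit `a`. -/
def gw {R : Type} [CommRing R] (a : Rˣ) : GW R :=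
  Ideal.Quotient.mk (Ideal.span (gwRel R)) (gen a)

/-- The (symmetric) Witt ring of `R` : the quotient of `GW(R)` by the ideal generated by the
hyperbolic element `[1] + [-1]`. -/
abbrev Wr (R : Type) [CommRing R] := GW R ⧸ Ideal.span {gw (R := R) 1 + gw (-1)}

/-- The class in the Witt ring of a unit `a`. -/
def wcl {R : Type} [CommRing R] (a : Rˣ) : Wr R :=
  Ideal.Quotient.mk (Ideal.span {gw (R := R) 1 + gw (-1)}) (gw a)

/-! The map `[a] ↦ [φ a]` respects the defining relations of `GW`, since a congruence of diagonal
forms over `R` maps to one over `S`. Its kernel contains the elements `[a] - [a x]` with `φ x = 1`,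
which span an ideal `K`. They span the whole kernel because `[b] ↦ [lift of b]` defines a map
`GW(S) → GW(R)/K` whose composite with `[a] ↦ [φ a]` is the projection. That map is well defined
on square classes since two lifts differ by a unit `x` with `φ x = 1`. It also respects
the relations: lift a congruence `Q · diag(φ a) · Qᵀ = diag b` over `S` entrywise to `R`. The
resulting symmetric matrix has unit diagonal and off-diagonal entries in `ker φ ⊆ 𝔪`, so
symmetric Gaussian elimination by matrices `≡ 1 mod ker φ` makes it diagonal. The new diagonal
entries are units lifting the `bᵢ`. -/

open Matrix

lemma Matrix.IsSymm.mul_mul_transpose {ι R : Type} [Fintype ι] [CommRing R]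
    {N : Matrix ι ι R} (hN : N.IsSymm) (E : Matrix ι ι R) : (E * N * Eᵀ).IsSymm := by
  rw [IsSymm, transpose_mul, transpose_mul, transpose_transpose, hN.eq, Matrix.mul_assoc]

lemma Matrix.map_mul_mul_transpose_of_map_eq_one {ι R S : Type} [Fintype ι] [DecidableEq ι]
    [CommRing R] [CommRing S] {φ : R →+* S} {E : Matrix ι ι R} (hE : E.map φ = 1)
    (M : Matrix ι ι R) : (E * M * Eᵀ).map φ = M.map φ := by
  rw [Matrix.map_mul, Matrix.map_mul, transpose_map, hE, transpose_one, one_mul, mul_one]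

lemma AddSubgroup.mul_mem_closure_of_closure_eq_top {A : Type} [Ring A] {s t : Set A}
    (ht : closure t = ⊤) (hst : ∀ x ∈ t, ∀ y ∈ s, x * y ∈ s) (z : A) {y : A}
    (hy : y ∈ closure s) : z * y ∈ closure s := by
  have hz : z ∈ closure t := ht ▸ mem_top z
  induction hz using closure_induction with
  | mem x hx =>
    exact (closure_le (K := (closure s).comap (AddMonoidHom.mulLeft x))).mpr
      (fun y hy => subset_closure (hst x hx y hy)) hy
  | zero => rw [zero_mul]; exact zero_mem _
  | add x x' _ _ hx hx' => rw [add_mul]; exact add_mem hx hx'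
  | neg x _ hx => rw [neg_mul]; exact neg_mem hx

lemma IsLocalHom.surjective_units_map {R S : Type} [CommRing R] [CommRing S] (φ : R →+* S)
    [IsLocalHom φ] (hφ : Function.Surjective φ) : Function.Surjective (Units.map (φ : R →* S)) :=
  IsLocalRing.surjective_units_map_of_local_ringHom φ hφ ‹_›

section Diagonalization

variable {R S : Type} [CommRing R] [CommRing S] (φ : R →+* S) {n : ℕ}

lemma exists_map_eq_one_clear_column (N : Matrix (Fin n) (Fin n) R) (hN : N.IsSymm)
    (k : Fin n) (hk : IsUnit (N k k)) (hφk : ∀ j, j ≠ k → φ (N j k) = 0)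
    (hcols : ∀ j l : Fin n, l < k → j ≠ l → N j l = 0) :
    ∃ E : Matrix (Fin n) (Fin n) R, E.map φ = 1 ∧
      ∀ j l : Fin n, l ≤ k → j ≠ l → (E * N * Eᵀ) j l = 0 := by
  -- `E` subtracts `N j k / N k k` times row `k` from row `j` (and `Eᵀ` does the same on columns);
  -- these multipliers lie in `ker φ`.
  set c : Fin n → R := fun j => if j = k then 0 else -(N j k * Ring.inverse (N k k)) with hc
  have hcN : ∀ j, N j k + c j * N k k = if j = k then N k k else 0 := by
    intro j
    by_cases hj : j = k
    · simp [hc, hj]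
    · simp [hc, hj, mul_assoc, Ring.inverse_mul_cancel _ hk]
  set E : Matrix (Fin n) (Fin n) R := 1 + of fun j l => if l = k then c j else 0
  have hE : ∀ j l, (E * N * Eᵀ) j l = N j l + c j * N k l + (N j k + c j * N k k) * c l := by
    intro j l
    simp only [E, transpose_add, transpose_one, add_mul, mul_add, one_mul, mul_one,
      Matrix.add_apply]
    simp [Matrix.mul_apply]
  refine ⟨E, ?_, fun j l hl hjl => ?_⟩
  · ext j l
    by_cases hl : l = k <;> by_cases hj : j = k <;>
      simp [E, hc, one_apply, hl, hj, hφk j]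
  · rw [hE, hcN]
    rcases hl.lt_or_eq with hl | rfl
    · have hNlk : N l k = 0 := by rw [hN.apply k l]; exact hcols k l hl hl.ne'
      simp [hc, hcols j l hl hjl, hcols k l hl hl.ne', hNlk]
    · rw [hcN, if_neg hjl, zero_mul, add_zero]

lemma exists_map_eq_one_isDiag [IsLocalHom φ] (M : Matrix (Fin n) (Fin n) R) (hM : M.IsSymm)
    (d : Fin n → S) (hd : ∀ i, IsUnit (d i)) (hMd : M.map φ = diagonal d) :
    ∃ E : Matrix (Fin n) (Fin n) R, E.map φ = 1 ∧ (E * M * Eᵀ).IsDiag := by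
  suffices h : ∀ k ≤ n, ∃ E : Matrix (Fin n) (Fin n) R, E.map φ = 1 ∧
      ∀ j l : Fin n, (l : ℕ) < k → j ≠ l → (E * M * Eᵀ) j l = 0 by
    obtain ⟨E, hE, hdiag⟩ := h n le_rfl
    exact ⟨E, hE, fun j l hjl => hdiag j l l.isLt hjl⟩
  intro k hk
  induction k with
  | zero => exact ⟨1, by simp, by simp⟩
  | succ k ih =>
    obtain ⟨E, hE, hcols⟩ := ih (by omega)
    set N := E * M * Eᵀ
    have hφN : ∀ j l, φ (N j l) = diagonal d j l := fun j l => by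
      rw [← hMd, ← map_mul_mul_transpose_of_map_eq_one hE, Matrix.map_apply]
    obtain ⟨E', hE', hcols'⟩ := exists_map_eq_one_clear_column φ N (hM.mul_mul_transpose E)
      ⟨k, by omega⟩ (isUnit_of_map_unit φ _ (by rw [hφN, diagonal_apply_eq]; exact hd _))
      (fun j hj => by rw [hφN, diagonal_apply_ne _ hj]) hcols
    refine ⟨E' * E, by rw [Matrix.map_mul, hE', hE, mul_one], fun j l hl hjl => ?_⟩
    have hEN : E' * E * M * (E' * E)ᵀ = E' * N * E'ᵀ := by
      simp only [N, transpose_mul, Matrix.mul_assoc]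
    rw [hEN]
    exact hcols' j l (show (l : ℕ) ≤ k by omega) hjl

end Diagonalization

section GrothendieckWitt

variable {R T : Type} [CommRing R] [CommRing T]

lemma cls_mul (a b : Rˣ) : cls (a * b) = cls a * cls b := rfl

lemma cls_one : cls (1 : Rˣ) = 1 := rfl

lemma cls_mul_self (t : Rˣ) : cls (t * t) = 1 :=
  (QuotientGroup.eq_one_iff _).mpr ⟨t, pow_two t⟩

lemma gw_mul (a b : Rˣ) : gw (a * b) = gw a * gw b := by
  rw [gw, gw, gw, gen, gen, gen, cls_mul, map_mul, map_mul]

lemma gw_one : gw (1 : Rˣ) = 1 := by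
  rw [gw, gen, cls_one, map_one, map_one]

lemma gw_mul_self (t : Rˣ) : gw (t * t) = 1 := by
  rw [gw, gen, cls_mul_self, map_one, map_one]

lemma gw_eq_gw_of_cls_eq {a b : Rˣ} (h : cls a = cls b) : gw a = gw b := by
  rw [gw, gw, gen, gen, h]

lemma sum_gw_eq_of_congruent (a b : Fin 4 → Rˣ) (P : Matrix (Fin 4) (Fin 4) R)
    (hP : IsUnit P.det)
    (hab : P * diagonal (fun i => (a i : R)) * Pᵀ = diagonal fun i => (b i : R)) :
    ∑ i, gw (a i) = ∑ i, gw (b i) := by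
  simp only [gw, ← map_sum]
  exact Ideal.Quotient.eq.mpr (Ideal.subset_span ⟨a, b, P, hP, hab, rfl⟩)

namespace GW

variable (R) in
def gwHom : Rˣ →* GW R where
  toFun := gw
  map_one' := gw_one
  map_mul' := gw_mul

lemma closure_range_gw : AddSubgroup.closure (Set.range (gw : Rˣ → GW R)) = ⊤ := by
  rw [eq_top_iff]
  rintro y -
  obtain ⟨c, rfl⟩ := Ideal.Quotient.mk_surjective y
  induction c using MonoidAlgebra.induction_on with
  | of g =>
    obtain ⟨v, rfl⟩ := QuotientGroup.mk_surjective g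
    exact AddSubgroup.subset_closure ⟨v, rfl⟩
  | add f g hf hg => rw [map_add]; exact add_mem hf hg
  | smul m f hf => rw [map_zsmul]; exact zsmul_mem hf m

lemma ringHom_ext {f g : GW R →+* T} (h : ∀ a, f (gw a) = g (gw a)) : f = g :=
  RingHom.coe_addMonoidHom_injective <|
    AddMonoidHom.eq_of_eqOn_dense closure_range_gw (by rintro _ ⟨a, rfl⟩; exact h a)

def PreservesRel {M : Type} [AddCommMonoid M] (F : Rˣ → M) : Prop :=
  ∀ (a b : Fin 4 → Rˣ) (P : Matrix (Fin 4) (Fin 4) R), IsUnit P.det →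
    P * diagonal (fun i => (a i : R)) * Pᵀ = diagonal (fun i => (b i : R)) →
    ∑ i, F (a i) = ∑ i, F (b i)

def liftGRing (F : Rˣ →* T) (hsq : ∀ t, F (t * t) = 1) : GRing R →+* T :=
  (MonoidAlgebra.lift ℤ T (SqCl R) <| QuotientGroup.lift _ F <| by
    rintro _ ⟨t, rfl⟩
    rw [MonoidHom.mem_ker, powMonoidHom_apply, pow_two, hsq]).toRingHom

lemma liftGRing_gen (F : Rˣ →* T) (hsq : ∀ t, F (t * t) = 1) (a : Rˣ) :
    liftGRing F hsq (gen a) = F a :=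
  MonoidAlgebra.lift_of _ _

def lift (F : Rˣ →* T) (hsq : ∀ t, F (t * t) = 1) (hrel : PreservesRel ⇑F) : GW R →+* T :=
  Ideal.Quotient.lift _ (liftGRing F hsq) fun x hx => by
    refine (Ideal.span_le (I := RingHom.ker _)).mpr ?_ hx
    rintro _ ⟨a, b, P, hP, hab, rfl⟩
    simp only [SetLike.mem_coe, RingHom.mem_ker, map_sub, map_sum, liftGRing_gen,
      hrel a b P hP hab, sub_self]

lemma lift_gw (F : Rˣ →* T) (hsq : ∀ t, F (t * t) = 1) (hrel : PreservesRel ⇑F) (a : Rˣ) :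
    lift F hsq hrel (gw a) = F a :=
  liftGRing_gen F hsq a

end GW

end GrothendieckWitt

namespace GW

section Map

variable {R S : Type} [CommRing R] [CommRing S] (φ : R →+* S)

def map : GW R →+* GW S :=
  lift ((gwHom S).comp (Units.map (φ : R →* S)))
    (fun t => by rw [MonoidHom.comp_apply, map_mul]; exact gw_mul_self (Units.map (φ : R →* S) t))
    fun a b P hP hab => sum_gw_eq_of_congruent _ _ (P.map φ)
      (by simpa only [RingHom.map_det, RingHom.mapMatrix_apply] using hP.map φ)
      (by simpa [Matrix.map_mul, transpose_map, diagonal_map] using congrArg (Matrix.map · φ) hab)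

lemma map_gw (a : Rˣ) : map φ (gw a) = gw (Units.map (φ : R →* S) a) :=
  lift_gw _ _ _ a

lemma map_surjective (hφ : Function.Surjective (Units.map (φ : R →* S))) :
    Function.Surjective (map φ) := by
  intro y
  have hy : y ∈ AddSubgroup.closure (Set.range (gw : Sˣ → GW S)) := by
    rw [closure_range_gw]; trivial
  refine (AddSubgroup.closure_le (K := (map φ).toAddMonoidHom.range)).mpr ?_ hy
  rintro _ ⟨b, rfl⟩
  obtain ⟨a, rfl⟩ := hφ b
  exact ⟨gw a, map_gw φ a⟩

def kerGens : Set (GW R) := {z | ∃ a x : Rˣ, φ (x : R) = 1 ∧ z = gw a - gw (a * x)}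

def kerIdeal : Ideal (GW R) where
  __ := AddSubgroup.closure (kerGens φ)
  smul_mem' z _ hy := AddSubgroup.mul_mem_closure_of_closure_eq_top closure_range_gw
    (by
      rintro _ ⟨v, rfl⟩ _ ⟨a, x, hx, rfl⟩
      exact ⟨v * a, x, hx, by rw [mul_sub, ← gw_mul, ← gw_mul, mul_assoc]⟩) z hy

lemma mem_kerIdeal {y : GW R} : y ∈ kerIdeal φ ↔ y ∈ AddSubgroup.closure (kerGens φ) := Iff.rfl

lemma closure_kerGens_le_ker : AddSubgroup.closure (kerGens φ) ≤ (map φ).toAddMonoidHom.ker := by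
  refine (AddSubgroup.closure_le _).mpr ?_
  rintro _ ⟨a, x, hx, rfl⟩
  have hx1 : Units.map (φ : R →* S) x = 1 := Units.ext hx
  simp [map_gw, hx1]

lemma closure_kerGens_eq_bot
    (hinj : ∀ a b : Rˣ, cls (Units.map (φ : R →* S) a) = cls (Units.map (φ : R →* S) b) →
      cls a = cls b) :
    AddSubgroup.closure (kerGens φ) = ⊥ := by
  refine AddSubgroup.closure_eq_bot_iff.mpr ?_
  rintro _ ⟨a, x, hx, rfl⟩
  have hx1 : Units.map (φ : R →* S) x = Units.map (φ : R →* S) 1 := Units.ext (by simpa using hx)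
  have hax : cls (a * x) = cls a := by rw [cls_mul, hinj x 1 (congrArg cls hx1), cls_one, mul_one]
  rw [Set.mem_singleton_iff, gw_eq_gw_of_cls_eq hax, sub_self]

lemma mk_gw_eq_of_units_map_eq {v w : Rˣ}
    (h : Units.map (φ : R →* S) v = Units.map (φ : R →* S) w) :
    Ideal.Quotient.mk (kerIdeal φ) (gw v) = Ideal.Quotient.mk (kerIdeal φ) (gw w) := by
  have hx : φ ((v⁻¹ * w : Rˣ) : R) = 1 := by
    simpa using congrArg Units.val (by rw [map_mul, map_inv, h, inv_mul_cancel] :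
      Units.map (φ : R →* S) (v⁻¹ * w) = 1)
  refine Ideal.Quotient.eq.mpr (AddSubgroup.subset_closure ⟨v, v⁻¹ * w, hx, ?_⟩)
  rw [mul_inv_cancel_left]

end Map

section SurjectiveLocal

variable {R S : Type} [CommRing R] [CommRing S] (φ : R →+* S) [IsLocalHom φ]
  (hφ : Function.Surjective φ)
include hφ

lemma exists_congruent_diagonal_lift {n : ℕ} (a : Fin n → Rˣ) (b : Fin n → Sˣ)
    (Q : Matrix (Fin n) (Fin n) S) (hQ : IsUnit Q.det)
    (hab : Q * diagonal (fun i => φ (a i)) * Qᵀ = diagonal fun i => (b i : S)) :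
    ∃ (P : Matrix (Fin n) (Fin n) R) (u : Fin n → Rˣ), IsUnit P.det ∧
      P * diagonal (fun i => (a i : R)) * Pᵀ = diagonal (fun i => (u i : R)) ∧
      ∀ i, Units.map (φ : R →* S) (u i) = b i := by
  obtain ⟨P, rfl⟩ : ∃ P : Matrix (Fin n) (Fin n) R, P.map φ = Q :=
    ⟨Q.map (Function.surjInv hφ), by ext; simp [Function.surjInv_eq hφ]⟩
  set M := P * diagonal (fun i => (a i : R)) * Pᵀ
  have hMd : M.map φ = diagonal fun i => (b i : S) := by
    rw [← hab, Matrix.map_mul, Matrix.map_mul, transpose_map, diagonal_map (map_zero φ)]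
  obtain ⟨E, hE, hdiag⟩ := exists_map_eq_one_isDiag φ M ((isSymm_diagonal _).mul_mul_transpose P)
    _ (fun i => (b i).isUnit) hMd
  have hφN : ∀ i, φ ((E * M * Eᵀ) i i) = b i := fun i => by
    rw [← Matrix.map_apply (f := φ), map_mul_mul_transpose_of_map_eq_one hE, hMd,
      diagonal_apply_eq]
  have hu : ∀ i, IsUnit ((E * M * Eᵀ) i i) :=
    fun i => isUnit_of_map_unit φ _ (by rw [hφN]; exact (b i).isUnit)
  refine ⟨E * P, fun i => (hu i).unit, isUnit_of_map_unit φ _ ?_, ?_, fun i => Units.ext ?_⟩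
  · rw [RingHom.map_det, RingHom.mapMatrix_apply, Matrix.map_mul, hE, one_mul]
    exact hQ
  · have hEP : E * P * diagonal (fun i => (a i : R)) * (E * P)ᵀ = E * M * Eᵀ := by
      simp only [M, transpose_mul, Matrix.mul_assoc]
    rw [hEP]
    exact hdiag.diagonal_diag.symm.trans
      (congrArg diagonal (funext fun i => (hu i).unit_spec.symm))
  · simpa using hφN i

lemma mk_sum_gw_eq_of_map_congruent (a a' : Fin 4 → Rˣ) (Q : Matrix (Fin 4) (Fin 4) S)
    (hQ : IsUnit Q.det)
    (h : Q * diagonal (fun i => φ (a i)) * Qᵀ = diagonal fun i => φ (a' i)) :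
    Ideal.Quotient.mk (kerIdeal φ) (∑ i, gw (a i)) =
      Ideal.Quotient.mk (kerIdeal φ) (∑ i, gw (a' i)) := by
  obtain ⟨P, u, hP, hPu, hu⟩ :=
    exists_congruent_diagonal_lift φ hφ a (fun i => Units.map (φ : R →* S) (a' i)) Q hQ h
  rw [sum_gw_eq_of_congruent a u P hP hPu, map_sum, map_sum]
  exact Finset.sum_congr rfl fun i _ => mk_gw_eq_of_units_map_eq φ (hu i)

def mapInvModKerUnits : Sˣ →* GW R ⧸ kerIdeal φ where
  toFun b := Ideal.Quotient.mk _ (gw (Function.surjInv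
    (IsLocalHom.surjective_units_map φ hφ) b))
  map_one' := by
    have h1 := Function.surjInv_eq (IsLocalHom.surjective_units_map φ hφ) 1
    rw [mk_gw_eq_of_units_map_eq φ (w := 1) (by rw [h1, map_one]), gw_one, map_one]
  map_mul' b c := by
    rw [← map_mul, ← gw_mul]
    exact mk_gw_eq_of_units_map_eq φ (by simp only [Function.surjInv_eq _ _, map_mul])

lemma mapInvModKerUnits_units_map (a : Rˣ) :
    mapInvModKerUnits φ hφ (Units.map (φ : R →* S) a) = Ideal.Quotient.mk _ (gw a) :=
  mk_gw_eq_of_units_map_eq φ (Function.surjInv_eq _ _)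

lemma mapInvModKerUnits_mul_self (t : Sˣ) : mapInvModKerUnits φ hφ (t * t) = 1 := by
  obtain ⟨s, rfl⟩ := IsLocalHom.surjective_units_map φ hφ t
  rw [← map_mul, mapInvModKerUnits_units_map, gw_mul_self, map_one]

lemma preservesRel_mapInvModKerUnits : PreservesRel ⇑(mapInvModKerUnits φ hφ) := by
  intro b b' Q hQ h
  have hu := IsLocalHom.surjective_units_map φ hφ
  obtain ⟨a, rfl⟩ := hu.comp_left b
  obtain ⟨a', rfl⟩ := hu.comp_left b'
  simp only [Function.comp_apply, mapInvModKerUnits_units_map, ← map_sum]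
  exact mk_sum_gw_eq_of_map_congruent φ hφ a a' Q hQ h

def mapInvModKer : GW S →+* GW R ⧸ kerIdeal φ :=
  lift (T := GW R ⧸ kerIdeal φ) (mapInvModKerUnits φ hφ) (mapInvModKerUnits_mul_self φ hφ)
    (preservesRel_mapInvModKerUnits φ hφ)

lemma mapInvModKer_map (y : GW R) :
    mapInvModKer φ hφ (map φ y) = Ideal.Quotient.mk (kerIdeal φ) y :=
  RingHom.congr_fun (ringHom_ext (T := GW R ⧸ kerIdeal φ) (f := (mapInvModKer φ hφ).comp (map φ))
    (g := Ideal.Quotient.mk (kerIdeal φ)) fun a => by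
    rw [RingHom.comp_apply, map_gw, mapInvModKer, lift_gw, mapInvModKerUnits_units_map]) y

lemma map_eq_zero_iff (y : GW R) : map φ y = 0 ↔ y ∈ AddSubgroup.closure (kerGens φ) := by
  refine ⟨fun h => ?_, fun h => closure_kerGens_le_ker φ h⟩
  rw [← mem_kerIdeal, ← Ideal.Quotient.eq_zero_iff_mem, ← mapInvModKer_map φ hφ, h, map_zero]

end SurjectiveLocal

end GW

/-- A surjective ring homomorphism `φ : R → S` between commutative local rings
induces a surjective ring homomorphism `GW(R) → GW(S)`, `[a] ↦ [φ(a)]`, whose kernel is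
additively generated by the elements `[a] − [a·x]` for units `a, x` with `φ(x) = 1`; it is an
isomorphism whenever the induced map on square classes is injective. -/
theorem gw_map_of_surjective
    (R S : Type) [CommRing R] [IsLocalRing R] [CommRing S] [IsLocalRing S]
    (φ : R →+* S) (hφ : Function.Surjective φ) :
    ∃ ψ : GW R →+* GW S,
      (∀ a : Rˣ, ψ (gw a) = gw (Units.map (φ : R →* S) a)) ∧
      Function.Surjective ψ ∧
      (∀ y : GW R, ψ y = 0 ↔
        y ∈ AddSubgroup.closure
          {z : GW R | ∃ a x : Rˣ, φ (x : R) = 1 ∧ z = gw a - gw (a * x)}) ∧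
      ((∀ a b : Rˣ, cls (Units.map (φ : R →* S) a) = cls (Units.map (φ : R →* S) b) →
          cls a = cls b) → Function.Bijective ψ) := by
  have := IsLocalHom.of_surjective φ hφ
  have hsurj := GW.map_surjective φ (IsLocalHom.surjective_units_map φ hφ)
  refine ⟨GW.map φ, GW.map_gw φ, hsurj, GW.map_eq_zero_iff φ hφ, fun hinj => ⟨?_, hsurj⟩⟩
  refine (injective_iff_map_eq_zero _).mpr fun y hy => ?_
  rwa [GW.map_eq_zero_iff φ hφ, GW.closure_kerGens_eq_bot φ hinj, AddSubgroup.mem_bot] at hy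
end
end

section
/- There is an isomorphism of abelian groups ℤ × ℤ/4 × ℤ/2 ≅ GW(ℤ/8) sending (1, 0, 0) to [1], (0, 1, 0) to ⟨⟨3⟩⟩ = [1] − [3], and (0, 0, 1) to ⟨⟨5⟩⟩ = [1] − [5]. -/
noncomputable section

/-!
Rank, trace modulo 8 and determinant of a diagonal unit form over `ℤ/8` are invariant under
congruence: the trace because the quadratic Gauss sum `∑ₓ ζ^(xᵀAx)` (`ζ` a primitive eighth root
of unity) is, and equals `4ⁿ ζ^(a₁ + ⋯ + aₙ)` for `A = diag(a₁, …, aₙ)`; the determinant because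
every unit of `ℤ/8` squares to `1`. Since scaling a relation by a unit gives a relation, the ideal
of relations is their additive span, so these invariants yield an additive map
`GW(ℤ/8) → ℤ × ℤ/4 × ℤ/2`. Conversely the congruences `4⟨1⟩ ≅ 4⟨3⟩`, `⟨1, 1⟩ ≅ ⟨5, 5⟩` and
`⟨1, 7⟩ ≅ ⟨3, 5⟩` show that `⟨⟨3⟩⟩` and `⟨⟨5⟩⟩` are killed by `4` and `2` and that `[1]`, `⟨⟨3⟩⟩`,
`⟨⟨5⟩⟩` generate `GW(ℤ/8)`; the two maps are mutually inverse.
-/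

namespace GW

variable {R : Type} [CommRing R] {M : Type*} [AddCommGroup M]

theorem gen_eq_single (a : Rˣ) : gen a = MonoidAlgebra.single (cls a) (1 : ℤ) := rfl

theorem gen_mul (a b : Rˣ) : gen (a * b) = gen a * gen b :=
  map_mul (MonoidAlgebra.of ℤ (SqCl R)) (cls a) (cls b)

theorem gen_mul_mem_gwRel (w : Rˣ) {x : GRing R} (hx : x ∈ gwRel R) : gen w * x ∈ gwRel R := by
  obtain ⟨a, b, P, hP, h, rfl⟩ := hx
  have diagonal_mul (c : Fin 4 → Rˣ) :
      Matrix.diagonal (fun i => ((w * c i : Rˣ) : R)) =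
        (w : R) • Matrix.diagonal (fun i => (c i : R)) := by
    rw [← Matrix.diagonal_smul]; rfl
  refine ⟨(w * ·) ∘ a, (w * ·) ∘ b, P, hP, ?_, ?_⟩
  · simp only [Function.comp_apply, diagonal_mul, Matrix.mul_smul, Matrix.smul_mul, h]
  · simp only [mul_sub, Finset.mul_sum, Function.comp_apply, gen_mul]

theorem map_eq_zero_of_mem_span (φ : GRing R →+ M) (hφ : ∀ x ∈ gwRel R, φ x = 0)
    {x : GRing R} (hx : x ∈ Ideal.span (gwRel R)) : φ x = 0 := by
  suffices ∀ c, φ (c * x) = 0 by simpa using this 1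
  induction hx using Submodule.span_induction with
  | mem s hs =>
    intro c
    induction c using MonoidAlgebra.induction_on with
    | of g =>
      obtain ⟨w, rfl⟩ := QuotientGroup.mk_surjective g
      exact hφ _ (gen_mul_mem_gwRel w hs)
    | add c d hc hd => rw [add_mul, map_add, hc, hd, add_zero]
    | smul n c hc => rw [smul_mul_assoc, map_zsmul, hc, smul_zero]
  | zero => simp
  | add y z _ _ hy hz => intro c; rw [mul_add, map_add, hy, hz, add_zero]
  | smul r y _ hy => intro c; rw [smul_eq_mul, ← mul_assoc]; exact hy (c * r)

section Lift

variable (f : Rˣ → M) (hsq : ∀ a b, f (a * b ^ 2) = f a)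
  (hrel : ∀ (a b : Fin 4 → Rˣ) (P : Matrix (Fin 4) (Fin 4) R), IsUnit P.det →
    P * Matrix.diagonal (fun i => (a i : R)) * P.transpose = Matrix.diagonal (fun i => (b i : R)) →
    ∑ i, f (a i) = ∑ i, f (b i))

def groupRingLift : GRing R →+ M :=
  (Finsupp.liftAddHom fun g : SqCl R => zmultiplesHom M <| Quotient.liftOn' g f fun x y hxy => by
      obtain ⟨b, hb⟩ := QuotientGroup.leftRel_apply.mp hxy
      rw [← hsq x b, ← mul_inv_cancel_left x y, ← hb]
      rfl).comp
    MonoidAlgebra.coeffAddEquiv.toAddMonoidHom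

theorem groupRingLift_gen (a : Rˣ) : groupRingLift f hsq (gen a) = f a :=
  (Finsupp.liftAddHom_apply_single _ _ _).trans (one_smul ℤ _)

def liftAddHom : GW R →+ M :=
  QuotientAddGroup.lift (Ideal.span (gwRel R)).toAddSubgroup (groupRingLift f hsq) fun _ hx =>
    map_eq_zero_of_mem_span _ (by
      rintro _ ⟨a, b, P, hP, h, rfl⟩
      simp [groupRingLift_gen, hrel a b P hP h]) hx

theorem liftAddHom_gw (a : Rˣ) : liftAddHom f hsq hrel (gw a) = f a :=
  groupRingLift_gen f hsq a

end Lift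

theorem sum_gw_eq_of_congr {a b : Fin 4 → Rˣ} {P : Matrix (Fin 4) (Fin 4) R} (hP : IsUnit P.det)
    (h : P * Matrix.diagonal (fun i => (a i : R)) * P.transpose =
      Matrix.diagonal (fun i => (b i : R))) :
    ∑ i, gw (a i) = ∑ i, gw (b i) := by
  simp only [gw, ← map_sum]
  exact Ideal.Quotient.eq.mpr (Ideal.subset_span ⟨a, b, P, hP, h, rfl⟩)

@[ext]
theorem addMonoidHom_ext {f g : GW R →+ M} (h : ∀ a, f (gw a) = g (gw a)) : f = g := by
  suffices f.comp (Ideal.Quotient.mk _).toAddMonoidHom =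
      g.comp (Ideal.Quotient.mk _).toAddMonoidHom from
    AddMonoidHom.ext fun x => by
      obtain ⟨y, rfl⟩ := Ideal.Quotient.mk_surjective x
      exact DFunLike.congr_fun this y
  refine MonoidAlgebra.addMonoidHom_ext fun q n => ?_
  obtain ⟨a, rfl⟩ : ∃ a, cls a = q := QuotientGroup.mk_surjective q
  have single_eq : MonoidAlgebra.single (cls a) n = n • gen a := by
    rw [gen_eq_single, MonoidAlgebra.smul_single', mul_one]
  simp only [AddMonoidHom.comp_apply, RingHom.toAddMonoidHom_eq_coe, AddMonoidHom.coe_coe]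
  rw [single_eq, map_zsmul, map_zsmul, map_zsmul]
  exact congrArg (n • ·) (h a)

end GW

theorem AddChar.map_sum_eq_prod {ι A M : Type*} [AddCommMonoid A] [CommMonoid M]
    (ψ : AddChar A M) (s : Finset ι) (f : ι → A) : ψ (∑ i ∈ s, f i) = ∏ i ∈ s, ψ (f i) := by
  classical
  induction s using Finset.induction_on with
  | empty => simp
  | insert i s hi ih =>
    rw [Finset.sum_insert hi, Finset.prod_insert hi, AddChar.map_add_eq_mul, ih]

def ZMod.liftOfNsmulEqZero (n : ℕ) {G : Type*} [AddGroup G] (g : G) (hg : n • g = 0) :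
    ZMod n →+ G :=
  ZMod.lift n ⟨zmultiplesHom G g, by simpa using hg⟩

theorem ZMod.liftOfNsmulEqZero_intCast (n : ℕ) {G : Type*} [AddGroup G] (g : G) (hg : n • g = 0)
    (k : ℤ) : ZMod.liftOfNsmulEqZero n g hg k = k • g :=
  ZMod.lift_coe _ _ k

namespace Matrix

variable {n R : Type*} [Fintype n] [DecidableEq n] [CommRing R] [Fintype R]

theorem sum_dotProduct_mulVec_congr {M : Type*} [AddCommMonoid M] (f : R → M)
    (A : Matrix n n R) {P : Matrix n n R} (hP : IsUnit P.det) :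
    ∑ x : n → R, f (x ⬝ᵥ (P * A * Pᵀ) *ᵥ x) = ∑ x : n → R, f (x ⬝ᵥ A *ᵥ x) := by
  have hPt : Function.Bijective Pᵀ.mulVec := (mulVec_injective_of_isUnit <|
    (isUnit_iff_isUnit_det _).mpr (by rwa [det_transpose])).bijective_of_finite
  refine Fintype.sum_bijective _ hPt _ _ fun x => ?_
  rw [← mulVec_mulVec, ← mulVec_mulVec, dotProduct_mulVec, mulVec_transpose]

theorem sum_addChar_dotProduct_diagonal_mulVec {S : Type*} [CommRing S] (ψ : AddChar R S)
    (c : n → R) :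
    ∑ x : n → R, ψ (x ⬝ᵥ diagonal c *ᵥ x) = ∏ i, ∑ t : R, ψ (c i * t * t) := by
  rw [Fintype.prod_sum]
  refine Fintype.sum_congr _ _ fun x => ?_
  simp only [mulVec_diagonal, dotProduct, AddChar.map_sum_eq_prod]
  exact Fintype.prod_congr _ _ fun i => by rw [mul_left_comm, mul_assoc]

end Matrix

namespace ZModEight

open Matrix

theorem units_sq_eq_one : ∀ a : (ZMod 8)ˣ, a ^ 2 = 1 := by decide

theorem sum_univ {M : Type*} [AddCommMonoid M] (f : ZMod 8 → M) :
    ∑ t, f t = f 0 + f 1 + f 2 + f 3 + f 4 + f 5 + f 6 + f 7 :=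
  Fin.sum_univ_eight f

theorem stdAddChar_four : ZMod.stdAddChar (4 : ZMod 8) = -1 := by
  rw [show (4 : ZMod 8) = ((4 : ℤ) : ZMod 8) from rfl, ZMod.stdAddChar_coe,
    show 2 * Real.pi * Complex.I * ((4 : ℤ) : ℂ) / ((8 : ℕ) : ℂ) = Real.pi * Complex.I by
      push_cast; ring, Complex.exp_pi_mul_I]

theorem sum_stdAddChar_mul_mul_self (a : (ZMod 8)ˣ) :
    ∑ t : ZMod 8, ZMod.stdAddChar ((a : ZMod 8) * t * t) = 4 * ZMod.stdAddChar (a : ZMod 8) := by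
  obtain ⟨h₂, h₃, h₄, h₅, h₆, h₇⟩ : (a : ZMod 8) * 2 * 2 = 4 ∧ (a : ZMod 8) * 3 * 3 = a ∧
      (a : ZMod 8) * 4 * 4 = 0 ∧ (a : ZMod 8) * 5 * 5 = a ∧ (a : ZMod 8) * 6 * 6 = 4 ∧
      (a : ZMod 8) * 7 * 7 = a := by
    revert a; decide
  simp only [sum_univ, h₂, h₃, h₄, h₅, h₆, h₇, mul_zero, mul_one, AddChar.map_zero_eq_one,
    stdAddChar_four]
  ring

section Congruence

variable {n : Type*} [Fintype n] [DecidableEq n] {a b : n → (ZMod 8)ˣ} {P : Matrix n n (ZMod 8)}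

theorem sum_val_eq_of_congr (hP : IsUnit P.det)
    (h : P * diagonal (fun i => (a i : ZMod 8)) * Pᵀ = diagonal (fun i => (b i : ZMod 8))) :
    ∑ i, (a i : ZMod 8) = ∑ i, (b i : ZMod 8) := by
  have key := sum_dotProduct_mulVec_congr ZMod.stdAddChar (diagonal fun i => (a i : ZMod 8)) hP
  simp only [h, sum_addChar_dotProduct_diagonal_mulVec, sum_stdAddChar_mul_mul_self,
    Finset.prod_mul_distrib, ← AddChar.map_sum_eq_prod] at key
  exact ZMod.injective_stdAddChar (mul_left_cancel₀ (by simp) key.symm)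

theorem prod_val_eq_of_congr (hP : IsUnit P.det)
    (h : P * diagonal (fun i => (a i : ZMod 8)) * Pᵀ = diagonal (fun i => (b i : ZMod 8))) :
    ∏ i, (a i : ZMod 8) = ∏ i, (b i : ZMod 8) := by
  obtain ⟨d, hd⟩ := hP
  have key := congrArg det h
  rw [det_mul, det_mul, det_transpose, det_diagonal, det_diagonal, ← hd] at key
  rw [← key, mul_right_comm, ← Units.val_mul, ← sq, units_sq_eq_one, Units.val_one, one_mul]

end Congruence

def invariant (a : (ZMod 8)ˣ) : ℤ × ZMod 4 × ZMod 2 :=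
  (1, if (a : ZMod 8) = 3 ∨ (a : ZMod 8) = 7 then -1 else 0,
    if (a : ZMod 8) = 5 ∨ (a : ZMod 8) = 7 then 1 else 0)

/-- For four units `aᵢ` with sum `t` and product `d`,
`(t - 4) / 2 ≡ #{i | aᵢ ≡ 3, 7} + 2 • #{i | aᵢ ≡ 5, 7} (mod 4)`, and the parity of the second
count is read off from `d`. -/
def invariantOfTraceDet (t d : ZMod 8) : ℤ × ZMod 4 × ZMod 2 :=
  (4, -(((t - 4 + 4 * if d = 5 ∨ d = 7 then 1 else 0).val / 2 : ℕ) : ZMod 4),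
    if d = 5 ∨ d = 7 then 1 else 0)

set_option maxRecDepth 10000 in
theorem sum_invariant : ∀ a : Fin 4 → (ZMod 8)ˣ,
    ∑ i, invariant (a i) = invariantOfTraceDet (∑ i, (a i : ZMod 8)) (∏ i, (a i : ZMod 8)) := by
  decide

def gwInvariant : GW (ZMod 8) →+ ℤ × ZMod 4 × ZMod 2 :=
  GW.liftAddHom invariant (fun a b => by rw [units_sq_eq_one, mul_one]) fun a b _ hP h => by
    rw [sum_invariant, sum_invariant, sum_val_eq_of_congr hP h, prod_val_eq_of_congr hP h]

theorem gwInvariant_gw (a : (ZMod 8)ˣ) : gwInvariant (gw a) = invariant a :=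
  GW.liftAddHom_gw _ _ _ a

def unit3 : (ZMod 8)ˣ := ZMod.unitOfCoprime 3 (by decide)
def unit5 : (ZMod 8)ˣ := ZMod.unitOfCoprime 5 (by decide)
def unit7 : (ZMod 8)ˣ := ZMod.unitOfCoprime 7 (by decide)

theorem eq_one_or_eq_unit3_or_eq_unit5_or_eq_unit7 :
    ∀ a : (ZMod 8)ˣ, a = 1 ∨ a = unit3 ∨ a = unit5 ∨ a = unit7 := by
  decide

theorem invariant_one : invariant 1 = (1, 0, 0) := by decide
theorem invariant_unit3 : invariant unit3 = (1, -1, 0) := by decide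
theorem invariant_unit5 : invariant unit5 = (1, 0, 1) := by decide
theorem invariant_unit7 : invariant unit7 = (1, -1, 1) := by decide

theorem four_nsmul_gw_one_sub_gw_unit3 : 4 • (gw 1 - gw unit3 : GW (ZMod 8)) = 0 := by
  have h := GW.sum_gw_eq_of_congr (a := fun _ => 1) (b := fun _ => unit3)
    (P := !![1, 1, 1, 0; 1, 7, 0, 1; 1, 0, 7, 7; 0, 1, 7, 1])
    (isUnit_det_of_left_inverse (B := !![3, 3, 3, 0; 3, 5, 0, 3; 3, 0, 5, 5; 0, 3, 5, 3])
      (by decide))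
    (by decide)
  simp only [Fin.sum_univ_four] at h
  linear_combination h

theorem two_nsmul_gw_one_sub_gw_unit5 : 2 • (gw 1 - gw unit5 : GW (ZMod 8)) = 0 := by
  have h := GW.sum_gw_eq_of_congr (a := fun _ => 1) (b := ![unit5, unit5, 1, 1])
    (P := !![1, 2, 0, 0; 2, 7, 0, 0; 0, 0, 1, 0; 0, 0, 0, 1])
    (isUnit_det_of_left_inverse (B := !![5, 2, 0, 0; 2, 3, 0, 0; 0, 0, 1, 0; 0, 0, 0, 1])
      (by decide))
    (by decide)
  simp only [Fin.sum_univ_four, cons_val] at h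
  linear_combination h

theorem gw_one_add_gw_unit7 : gw 1 + gw unit7 = (gw unit3 + gw unit5 : GW (ZMod 8)) := by
  have h := GW.sum_gw_eq_of_congr (a := ![1, unit7, 1, 1]) (b := ![unit3, unit5, 1, 1])
    (P := !![2, 1, 0, 0; 1, 2, 0, 0; 0, 0, 1, 0; 0, 0, 0, 1])
    (isUnit_det_of_left_inverse (B := !![6, 5, 0, 0; 5, 6, 0, 0; 0, 0, 1, 0; 0, 0, 0, 1])
      (by decide))
    (by decide)
  simp only [Fin.sum_univ_four, cons_val] at h
  linear_combination h

def gwOfTriple : ℤ × ZMod 4 × ZMod 2 →+ GW (ZMod 8) :=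
  (zmultiplesHom _ (gw 1)).coprod
    ((ZMod.liftOfNsmulEqZero 4 _ four_nsmul_gw_one_sub_gw_unit3).coprod
      (ZMod.liftOfNsmulEqZero 2 _ two_nsmul_gw_one_sub_gw_unit5))

theorem gwOfTriple_intCast (m k l : ℤ) :
    gwOfTriple (m, k, l) = m • gw 1 + k • (gw 1 - gw unit3) + l • (gw 1 - gw unit5) := by
  simp [gwOfTriple, ZMod.liftOfNsmulEqZero_intCast, add_assoc]

theorem gwInvariant_gwOfTriple (x : ℤ × ZMod 4 × ZMod 2) : gwInvariant (gwOfTriple x) = x := by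
  obtain ⟨m, x, y⟩ := x
  obtain ⟨k, rfl⟩ := ZMod.intCast_surjective x
  obtain ⟨l, rfl⟩ := ZMod.intCast_surjective y
  simp only [gwOfTriple_intCast, map_add, map_zsmul, map_sub, gwInvariant_gw, invariant_one,
    invariant_unit3, invariant_unit5]
  ext <;> simp

theorem gwOfTriple_invariant (a : (ZMod 8)ˣ) : gwOfTriple (invariant a) = gw a := by
  obtain rfl | rfl | rfl | rfl := eq_one_or_eq_unit3_or_eq_unit5_or_eq_unit7 a
  · simpa [invariant_one] using gwOfTriple_intCast 1 0 0
  · simpa [invariant_unit3] using gwOfTriple_intCast 1 (-1) 0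
  · simpa [invariant_unit5] using gwOfTriple_intCast 1 0 (-1)
  · rw [show gw unit7 = gw unit3 + (gw unit5 - gw 1) by linear_combination gw_one_add_gw_unit7]
    simpa [invariant_unit7] using gwOfTriple_intCast 1 (-1) (-1)

end ZModEight

/-- `GW(ℤ/8) ≅ ℤ × ℤ/4 × ℤ/2` as abelian groups, via `(1,0,0) ↦ [1]`,
`(0,1,0) ↦ ⟨⟨3⟩⟩ = [1] − [3]` and `(0,0,1) ↦ ⟨⟨5⟩⟩ = [1] − [5]`. -/
theorem gw_zmod_eight :
    ∃ e : ℤ × ZMod 4 × ZMod 2 ≃+ GW (ZMod 8),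
      e (1, 0, 0) = gw 1 ∧
      e (0, 1, 0) = gw 1 - gw (ZMod.unitOfCoprime 3 (by decide)) ∧
      e (0, 0, 1) = gw 1 - gw (ZMod.unitOfCoprime 5 (by decide)) := by
  refine ⟨ZModEight.gwOfTriple.toAddEquiv ZModEight.gwInvariant
    (AddMonoidHom.ext ZModEight.gwInvariant_gwOfTriple)
    (GW.addMonoidHom_ext fun a => by
      simp [ZModEight.gwInvariant_gw, ZModEight.gwOfTriple_invariant]),
    ?_, ?_, ?_⟩
  · simpa using ZModEight.gwOfTriple_intCast 1 0 0
  · simpa [ZModEight.unit3] using ZModEight.gwOfTriple_intCast 0 1 0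
  · simpa [ZModEight.unit5] using ZModEight.gwOfTriple_intCast 0 0 1

end
end
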